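/- arXiv:2403.15071 — 2 statements merged into one kernel-verified Lean document; each statement's English description precedes it below -/
import Mathlib

section
/- Let (b̂₀, ê₁, ê₂) be an orthonormal basis of ℝ³ with b̂₀ = ê₁ × ê₂, define τ̂(θ) := −ê₁ sin θ − ê₂ cos θ and ρ̂(θ) := ê₁ cos θ − ê₂ sin θ, and let S : ℝ³ → ℝ³ be continuously differentiable. Then for every R ∈ ℝ³ and ρ > 0, (1/2π)∫₀^{2π} S(R + ρ ρ̂(θ)) · τ̂(θ) dθ = −(ρ/2π) ∫₀^1 ∫₀^{2π} ā (∇×S)(R + ā ρ ρ̂(θ)) · b̂₀ dθ dā; i.e. the gyro-average of the tangential component of S equals minus ρ/2 times the disc average of the parallel component of the curl of S. -/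
/-!
Parametrise the disc by `(a, θ) ↦ R + aρ ρ̂(θ)` and set `F = a S · ρ̂'`, `G = S · ρ̂`. Since
`(∇ × S) · (u × v) = DS u · v - DS v · u`, one gets `∂ₐF - ∂_θG = aρ (∇ × S) · (ρ̂ × ρ̂')`.
Integrating over `[0, 1] × [0, 2π]` by the fundamental theorem of calculus in each variable,
the boundary `a = 1` gives the gyro-average (`F` vanishes at `a = 0`) and the two boundaries
`θ = 0, 2π` cancel by periodicity. Finally `ρ̂ × τ̂ = ρ̂ × ρ̂' = -b̂₀`.
-/

open Matrix Real

/-- The partial derivative `∂f/∂rᵢ`. -/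
noncomputable def pd (i : Fin 3) (f : (Fin 3 → ℝ) → ℝ) (r : Fin 3 → ℝ) : ℝ :=
  fderiv ℝ f r (Pi.single i 1)

/-- The curl `∇ × F` of a vector field on ℝ³. -/
noncomputable def curl (F : (Fin 3 → ℝ) → Fin 3 → ℝ) (r : Fin 3 → ℝ) : Fin 3 → ℝ :=
  ![pd 1 (fun x => F x 2) r - pd 2 (fun x => F x 1) r,
    pd 2 (fun x => F x 0) r - pd 0 (fun x => F x 2) r,
    pd 0 (fun x => F x 1) r - pd 1 (fun x => F x 0) r]

open MeasureTheory intervalIntegral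

theorem HasDerivAt.dotProduct {𝕜 ι : Type*} [NontriviallyNormedField 𝕜] [Fintype ι]
    {f g : 𝕜 → ι → 𝕜} {f' g' : ι → 𝕜} {t : 𝕜}
    (hf : HasDerivAt f f' t) (hg : HasDerivAt g g' t) :
    HasDerivAt (fun s => f s ⬝ᵥ g s) (f' ⬝ᵥ g t + f t ⬝ᵥ g') t := by
  simp only [_root_.dotProduct, ← Finset.sum_add_distrib]
  exact HasDerivAt.fun_sum fun i _ => (hasDerivAt_pi.1 hf i).mul (hasDerivAt_pi.1 hg i)

theorem pd_apply_eq_fderiv {F : (Fin 3 → ℝ) → Fin 3 → ℝ} {p : Fin 3 → ℝ}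
    (hF : DifferentiableAt ℝ F p) (i j : Fin 3) :
    pd i (fun x => F x j) p = fderiv ℝ F p (Pi.single i 1) j := by
  rw [pd, fderiv_apply hF]
  rfl

theorem curl_dotProduct_crossProduct {F : (Fin 3 → ℝ) → Fin 3 → ℝ} {p : Fin 3 → ℝ}
    (hF : DifferentiableAt ℝ F p) (u v : Fin 3 → ℝ) :
    curl F p ⬝ᵥ crossProduct u v = fderiv ℝ F p u ⬝ᵥ v - fderiv ℝ F p v ⬝ᵥ u := by
  have hlin : ∀ w : Fin 3 → ℝ, fderiv ℝ F p w = ∑ i, w i • fderiv ℝ F p (Pi.single i 1) := by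
    intro w
    conv_lhs => rw [pi_eq_sum_univ' w]
    simp only [map_sum, map_smul]
  simp only [curl, cross_apply, dotProduct, Fin.sum_univ_three, hlin u, hlin v,
    pd_apply_eq_fderiv hF, Finset.sum_apply, Pi.smul_apply, smul_eq_mul]
  simp only [Matrix.cons_val_zero, Matrix.cons_val_one, Matrix.cons_val_two, Matrix.head_cons,
    Matrix.tail_cons]
  ring

theorem integral_integral_sub_eq_of_hasDerivAt {E : Type*} [NormedAddCommGroup E]
    [NormedSpace ℝ E] [CompleteSpace E] {F G F' G' : ℝ → ℝ → E} {a b c d : ℝ}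
    (hF : ∀ x y, HasDerivAt (F · y) (F' x y) x) (hG : ∀ x y, HasDerivAt (G x ·) (G' x y) y)
    (hF' : Continuous (Function.uncurry F')) (hG' : Continuous (Function.uncurry G')) :
    ∫ x in a..b, ∫ y in c..d, (F' x y - G' x y)
      = (∫ y in c..d, (F b y - F a y)) - ∫ x in a..b, (G x d - G x c) := by
  have ftc_F : ∀ y, ∫ x in a..b, F' x y = F b y - F a y := fun y =>
    integral_eq_sub_of_hasDerivAt (fun x _ => hF x y) ((hF'.uncurry_right y).intervalIntegrable _ _)
  have ftc_G : ∀ x, ∫ y in c..d, G' x y = G x d - G x c := fun x =>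
    integral_eq_sub_of_hasDerivAt (fun y _ => hG x y) ((hG'.uncurry_left x).intervalIntegrable _ _)
  have hF'_int : IntegrableOn (Function.uncurry F') (Set.uIoc a b ×ˢ Set.uIoc c d) :=
    (hF'.continuousOn.integrableOn_compact (isCompact_uIcc.prod isCompact_uIcc)).mono_set
      (Set.prod_mono Set.uIoc_subset_uIcc Set.uIoc_subset_uIcc)
  calc ∫ x in a..b, ∫ y in c..d, (F' x y - G' x y)
      = ∫ x in a..b, ((∫ y in c..d, F' x y) - ∫ y in c..d, G' x y) :=
        integral_congr fun x _ => integral_sub ((hF'.uncurry_left x).intervalIntegrable _ _)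
          ((hG'.uncurry_left x).intervalIntegrable _ _)
    _ = (∫ x in a..b, ∫ y in c..d, F' x y) - ∫ x in a..b, ∫ y in c..d, G' x y :=
        integral_sub
          ((continuous_parametric_intervalIntegral_of_continuous' hF' c d).intervalIntegrable _ _)
          ((continuous_parametric_intervalIntegral_of_continuous' hG' c d).intervalIntegrable _ _)
    _ = _ := by
        rw [intervalIntegral_intervalIntegral_swap hF'_int]
        simp only [ftc_F, ftc_G]

theorem integral_dotProduct_deriv_eq_integral_curl_dotProduct_cross
    {S : (Fin 3 → ℝ) → Fin 3 → ℝ} (hS : ContDiff ℝ 1 S) {γ γ' : ℝ → Fin 3 → ℝ}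
    (hγ : ∀ θ, HasDerivAt γ (γ' θ) θ) (hγ' : Continuous γ') {T : ℝ} (hT : γ T = γ 0)
    (R : Fin 3 → ℝ) (ρ : ℝ) :
    ∫ θ in (0:ℝ)..T, S (R + ρ • γ θ) ⬝ᵥ γ' θ
      = ρ * ∫ a in (0:ℝ)..1, ∫ θ in (0:ℝ)..T,
          a * (curl S (R + (a * ρ) • γ θ) ⬝ᵥ crossProduct (γ θ) (γ' θ)) := by
  set p : ℝ → ℝ → Fin 3 → ℝ := fun a θ => R + (a * ρ) • γ θ with hp
  have hSd : Differentiable ℝ S := hS.differentiable one_ne_zero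
  have hγc : Continuous γ := continuous_iff_continuousAt.2 fun θ => (hγ θ).continuousAt
  have hDS : Continuous (fderiv ℝ S) := hS.continuous_fderiv one_ne_zero
  have hp_a : ∀ a θ, HasDerivAt (p · θ) (ρ • γ θ) a := fun a θ =>
    ((hasDerivAt_mul_const ρ).smul_const (γ θ)).const_add R
  have hp_θ : ∀ a θ, HasDerivAt (p a ·) ((a * ρ) • γ' θ) θ := fun a θ =>
    ((hγ θ).const_smul (a * ρ)).const_add R
  have hF : ∀ a θ, HasDerivAt (fun a => a * (S (p a θ) ⬝ᵥ γ' θ))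
      (S (p a θ) ⬝ᵥ γ' θ + a * (fderiv ℝ S (p a θ) (ρ • γ θ) ⬝ᵥ γ' θ)) a := fun a θ =>
    ((hasDerivAt_id' a).mul (((hSd _).hasFDerivAt.comp_hasDerivAt a (hp_a a θ)).dotProduct
      (hasDerivAt_const a (γ' θ)))).congr_deriv (by simp)
  have hG : ∀ a θ, HasDerivAt (fun θ => S (p a θ) ⬝ᵥ γ θ)
      (fderiv ℝ S (p a θ) ((a * ρ) • γ' θ) ⬝ᵥ γ θ + S (p a θ) ⬝ᵥ γ' θ) θ := fun a θ =>
    ((hSd _).hasFDerivAt.comp_hasDerivAt θ (hp_θ a θ)).dotProduct (hγ θ)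
  have hcurl : ∀ a θ, (S (p a θ) ⬝ᵥ γ' θ + a * (fderiv ℝ S (p a θ) (ρ • γ θ) ⬝ᵥ γ' θ))
      - (fderiv ℝ S (p a θ) ((a * ρ) • γ' θ) ⬝ᵥ γ θ + S (p a θ) ⬝ᵥ γ' θ)
      = ρ * (a * (curl S (p a θ) ⬝ᵥ crossProduct (γ θ) (γ' θ))) := fun a θ => by
    rw [curl_dotProduct_crossProduct (hSd _), map_smul, map_smul, smul_dotProduct,
      smul_dotProduct, smul_eq_mul, smul_eq_mul]
    ring
  calc ∫ θ in (0:ℝ)..T, S (R + ρ • γ θ) ⬝ᵥ γ' θ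
      = (∫ θ in (0:ℝ)..T, (1 * (S (p 1 θ) ⬝ᵥ γ' θ) - 0 * (S (p 0 θ) ⬝ᵥ γ' θ)))
          - ∫ a in (0:ℝ)..1, (S (p a T) ⬝ᵥ γ T - S (p a 0) ⬝ᵥ γ 0) := by
        simp [hp, hT]
    _ = ∫ a in (0:ℝ)..1, ∫ θ in (0:ℝ)..T,
          ρ * (a * (curl S (p a θ) ⬝ᵥ crossProduct (γ θ) (γ' θ))) := by
        simp only [← hcurl]
        exact (integral_integral_sub_eq_of_hasDerivAt hF hG (by fun_prop) (by fun_prop)).symm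
    _ = _ := by simp_rw [intervalIntegral.integral_const_mul ρ]; rfl

theorem gyroaverage_tangential_eq_disc_average_curl_general
    (b0 e1 e2 : Fin 3 → ℝ)
    (hcross : b0 = crossProduct e1 e2)
    (τ ρh : ℝ → Fin 3 → ℝ)
    (hτ : ∀ θ, τ θ = (-Real.sin θ) • e1 - Real.cos θ • e2)
    (hρh : ∀ θ, ρh θ = Real.cos θ • e1 - Real.sin θ • e2)
    (S : (Fin 3 → ℝ) → Fin 3 → ℝ) (hS : ContDiff ℝ 1 S) :
    ∀ (R : Fin 3 → ℝ) (ρ : ℝ), 0 < ρ →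
      (1 / (2 * π)) * ∫ θ in (0:ℝ)..(2 * π), S (R + ρ • ρh θ) ⬝ᵥ τ θ
      = -(ρ / (2 * π)) *
          ∫ a in (0:ℝ)..1, ∫ θ in (0:ℝ)..(2 * π),
            a * (curl S (R + (a * ρ) • ρh θ) ⬝ᵥ b0) := by
  intro R ρ _
  have hρh_deriv : ∀ θ, HasDerivAt ρh (τ θ) θ := fun θ => by
    rw [funext hρh, hτ]
    exact ((hasDerivAt_cos θ).smul_const e1).sub ((hasDerivAt_sin θ).smul_const e2)
  have hτ_cont : Continuous τ := by
    rw [funext hτ]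
    fun_prop
  have hρh_periodic : ρh (2 * π) = ρh 0 := by simp [hρh]
  have hρh_cross_τ : ∀ θ, crossProduct (ρh θ) (τ θ) = -b0 := fun θ => by
    rw [hρh, hτ, hcross]
    simp only [map_sub, map_smul, LinearMap.sub_apply, LinearMap.smul_apply, cross_self,
      ← cross_anticomm e1 e2, smul_zero, sub_zero, zero_sub]
    match_scalars
    linear_combination -sin_sq_add_cos_sq θ
  rw [integral_dotProduct_deriv_eq_integral_curl_dotProduct_cross hS hρh_deriv hτ_cont
    hρh_periodic]
  simp only [hρh_cross_τ, dotProduct_neg, mul_neg, intervalIntegral.integral_neg]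
  ring

/-- Stokes's theorem for the gyro-average: the gyro-average of the
tangential component of `S` equals `−ρ/2` times the disc average of the parallel
component of `∇ × S`. -/
theorem gyroaverage_tangential_eq_disc_average_curl
    (b0 e1 e2 : Fin 3 → ℝ)
    (hb : b0 ⬝ᵥ b0 = 1) (he1 : e1 ⬝ᵥ e1 = 1) (he2 : e2 ⬝ᵥ e2 = 1)
    (hbe1 : b0 ⬝ᵥ e1 = 0) (hbe2 : b0 ⬝ᵥ e2 = 0) (he12 : e1 ⬝ᵥ e2 = 0)
    (hcross : b0 = crossProduct e1 e2)
    (τ ρh : ℝ → Fin 3 → ℝ)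
    (hτ : ∀ θ, τ θ = (-Real.sin θ) • e1 - Real.cos θ • e2)
    (hρh : ∀ θ, ρh θ = Real.cos θ • e1 - Real.sin θ • e2)
    (S : (Fin 3 → ℝ) → Fin 3 → ℝ) (hS : ContDiff ℝ 1 S) :
    ∀ (R : Fin 3 → ℝ) (ρ : ℝ), 0 < ρ →
      (1 / (2 * π)) * ∫ θ in (0:ℝ)..(2 * π), S (R + ρ • ρh θ) ⬝ᵥ τ θ
      = -(ρ / (2 * π)) *
          ∫ a in (0:ℝ)..1, ∫ θ in (0:ℝ)..(2 * π),
            a * (curl S (R + (a * ρ) • ρh θ) ⬝ᵥ b0) :=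
  gyroaverage_tangential_eq_disc_average_curl_general b0 e1 e2 hcross τ ρh hτ hρh S hS
end

section
/- Let b̂₀ = e₃ be the third standard basis vector of ℝ³, write ∇_⊥ := (∂_x, ∂_y, 0), Δ := ∂_x² + ∂_y² + ∂_z², Δ_⊥ := ∂_x² + ∂_y², and for a vector field X write X_⊥ := X − (X·b̂₀)b̂₀ and X∥ := X·b̂₀. Let A, 𝒥 : ℝ³ → ℝ³ be three times continuously differentiable and continuous, respectively, and suppose that pointwise (i) −Δ_⊥ A∥ = 𝒥∥, (ii) −Δ A_⊥ = 𝒥_⊥ − ∇_⊥(∂_z A∥), and (iii) ∂_x A_x + ∂_y A_y = 0 (the perpendicular Coulomb gauge). Then ∇×(∇×A) = 𝒥 at every point; i.e. a solution of the decoupled Poisson systems in the perpendicular Coulomb gauge solves the curl–curl (Ampère) equation with vanishing Lagrange multiplier. -/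
/-! For a `C²` field, `∇ × (∇ × A) = ∇(∇ · A) − ΔA` by symmetry of second derivatives. The
perpendicular Coulomb gauge turns `∇ · A` into `∂_z A∥`, so the perpendicular components of this
identity are exactly the perpendicular Poisson equation, and, since `Δ = Δ_⊥ + ∂_z²`, its parallel
component is exactly the parallel one. -/

open Matrix

/-- The constant unit field `b̂₀ = e₃`. -/
def e3 : Fin 3 → ℝ := Pi.single 2 1

/-- The perpendicular part `v_⊥ = v − (v·e₃) e₃`. -/
noncomputable def perp (v : Fin 3 → ℝ) : Fin 3 → ℝ := v - (v ⬝ᵥ e3) • e3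

/-- The Laplacian `Δf = ∂_x²f + ∂_y²f + ∂_z²f`. -/
noncomputable def lap (f : (Fin 3 → ℝ) → ℝ) (r : Fin 3 → ℝ) : ℝ :=
  ∑ i, pd i (fun x => pd i f x) r

/-- The perpendicular Laplacian `Δ_⊥ f = ∂_x²f + ∂_y²f`. -/
noncomputable def lapPerp (f : (Fin 3 → ℝ) → ℝ) (r : Fin 3 → ℝ) : ℝ :=
  pd 0 (fun x => pd 0 f x) r + pd 1 (fun x => pd 1 f x) r

/-- The perpendicular gradient `∇_⊥ f = (∂_x f, ∂_y f, 0)`. -/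
noncomputable def gradPerp (f : (Fin 3 → ℝ) → ℝ) (r : Fin 3 → ℝ) : Fin 3 → ℝ :=
  ![pd 0 f r, pd 1 f r, 0]

noncomputable def divergence (F : (Fin 3 → ℝ) → Fin 3 → ℝ) (r : Fin 3 → ℝ) : ℝ :=
  ∑ i, pd i (fun x => F x i) r

lemma contDiff_pd {f : (Fin 3 → ℝ) → ℝ} (hf : ContDiff ℝ 2 f) (i : Fin 3) :
    ContDiff ℝ 1 (fun x => pd i f x) :=
  (hf.fderiv_right (m := 1) le_rfl).clm_apply contDiff_const

lemma pd_comm {f : (Fin 3 → ℝ) → ℝ} (hf : ContDiff ℝ 2 f) (i j : Fin 3) (r : Fin 3 → ℝ) :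
    pd i (fun x => pd j f x) r = pd j (fun x => pd i f x) r := by
  have hd : Differentiable ℝ (fderiv ℝ f) :=
    (hf.fderiv_right (m := 1) le_rfl).differentiable one_ne_zero
  have hsymm := (hf.contDiffAt (x := r)).isSymmSndFDerivAt (by simp)
  simp only [pd]
  rw [fderiv_clm_apply (hd r) (differentiableAt_const _),
    fderiv_clm_apply (hd r) (differentiableAt_const _)]
  simpa using hsymm (Pi.single i 1) (Pi.single j 1)

lemma pd_sub (i : Fin 3) {f g : (Fin 3 → ℝ) → ℝ} {r : Fin 3 → ℝ}
    (hf : DifferentiableAt ℝ f r) (hg : DifferentiableAt ℝ g r) :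
    pd i (fun x => f x - g x) r = pd i f r - pd i g r := by
  simp [pd, fderiv_fun_sub hf hg]

lemma pd_sum (i : Fin 3) {ι : Type*} (s : Finset ι) {f : ι → (Fin 3 → ℝ) → ℝ}
    {r : Fin 3 → ℝ} (hf : ∀ k ∈ s, DifferentiableAt ℝ (f k) r) :
    pd i (fun x => ∑ k ∈ s, f k x) r = ∑ k ∈ s, pd i (f k) r := by
  simp [pd, fderiv_fun_sum hf]

theorem curl_curl_eq_pd_divergence_sub_lap {F : (Fin 3 → ℝ) → Fin 3 → ℝ} (hF : ContDiff ℝ 2 F) (r : Fin 3 → ℝ) :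
    curl (curl F) r = fun i => pd i (divergence F) r - lap (fun x => F x i) r := by
  have hFk (k : Fin 3) : ContDiff ℝ 2 (fun x => F x k) := contDiff_pi.mp hF k
  have hd (i k : Fin 3) : DifferentiableAt ℝ (fun x => pd i (fun y => F y k) x) r :=
    ((contDiff_pd (hFk k) i).differentiable one_ne_zero) r
  have hc (k i j : Fin 3) := pd_comm (hFk k) i j r
  funext i
  unfold divergence
  rw [pd_sum _ _ (fun k _ => hd k k)]
  fin_cases i <;>
  · simp only [curl, lap, Fin.sum_univ_three, Fin.isValue, cons_val_zero, cons_val_one,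
      cons_val_two, head_cons, tail_cons, Fin.zero_eta, Fin.mk_one, Fin.reduceFinMk]
    rw [pd_sub _ (hd _ _) (hd _ _), pd_sub _ (hd _ _) (hd _ _)]
    linarith [hc 0 0 1, hc 0 0 2, hc 1 0 1, hc 1 1 2, hc 2 0 2, hc 2 1 2]

lemma perp_apply_of_ne (v : Fin 3 → ℝ) {i : Fin 3} (hi : i ≠ 2) : perp v i = v i := by
  simp [perp, e3, hi]

lemma gradPerp_apply_of_ne (f : (Fin 3 → ℝ) → ℝ) (r : Fin 3 → ℝ) {i : Fin 3} (hi : i ≠ 2) :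
    gradPerp f r i = pd i f r := by
  fin_cases i <;> simp_all [gradPerp]

lemma lap_eq_lapPerp_add (f : (Fin 3 → ℝ) → ℝ) (r : Fin 3 → ℝ) :
    lap f r = lapPerp f r + pd 2 (fun x => pd 2 f x) r := by
  simp [lap, lapPerp, Fin.sum_univ_three]

lemma divergence_eq_of_gauge {A : (Fin 3 → ℝ) → Fin 3 → ℝ}
    (hgauge : ∀ r, pd 0 (fun x => A x 0) r + pd 1 (fun x => A x 1) r = 0) :
    divergence A = fun r => pd 2 (fun x => A x 2) r := by
  ext r
  simp [divergence, Fin.sum_univ_three, hgauge]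

theorem decoupled_poisson_solves_curl_curl_general
    (A Jv : (Fin 3 → ℝ) → Fin 3 → ℝ)
    (hA : ContDiff ℝ 3 A)
    (hpar : ∀ r, -lapPerp (fun x => A x 2) r = Jv r 2)
    (hperpEq : ∀ r, (fun i => -lap (fun x => perp (A x) i) r)
        = perp (Jv r) - gradPerp (fun x => pd 2 (fun y => A y 2) x) r)
    (hgauge : ∀ r, pd 0 (fun x => A x 0) r + pd 1 (fun x => A x 1) r = 0) :
    ∀ r, curl (fun x => curl A x) r = Jv r := by
  intro r
  rw [curl_curl_eq_pd_divergence_sub_lap (hA.of_le (by norm_num)) r, divergence_eq_of_gauge hgauge]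
  funext i
  by_cases hi : i = 2
  · subst hi
    rw [lap_eq_lapPerp_add]
    linarith [hpar r]
  · have h := congrFun (hperpEq r) i
    simp only [Pi.sub_apply, perp_apply_of_ne _ hi, gradPerp_apply_of_ne _ _ hi] at h
    linarith

/-- a solution of the decoupled Poisson systems in the perpendicular
Coulomb gauge solves the curl–curl (Ampère) equation. -/
theorem decoupled_poisson_solves_curl_curl
    (A Jv : (Fin 3 → ℝ) → Fin 3 → ℝ)
    (hA : ContDiff ℝ 3 A) (hJ : Continuous Jv)
    (hpar : ∀ r, -lapPerp (fun x => A x 2) r = Jv r 2)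
    (hperpEq : ∀ r, (fun i => -lap (fun x => perp (A x) i) r)
        = perp (Jv r) - gradPerp (fun x => pd 2 (fun y => A y 2) x) r)
    (hgauge : ∀ r, pd 0 (fun x => A x 0) r + pd 1 (fun x => A x 1) r = 0) :
    ∀ r, curl (fun x => curl A x) r = Jv r :=
  decoupled_poisson_solves_curl_curl_general A Jv hA hpar hperpEq hgauge
end
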